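/- Let A and B be n×n Hermitian complex matrices. Then there exist n×n unitary matrices U and V such that |A+B| ≤ U |A| Uᴴ + V |B| Vᴴ in the Loewner order. -/

import Mathlib

open Matrix
open scoped ComplexOrder

/-- The `j`-th largest eigenvalue of a Hermitian matrix (`0`-indexed, so `eigDesc hA ⟨0, _⟩`
is the largest), counted with multiplicity. -/
noncomputable def eigDesc {n : ℕ} {A : Matrix (Fin n) (Fin n) ℂ} (hA : A.IsHermitian)
    (j : Fin n) : ℝ :=
  hA.eigenvalues (Tuple.sort hA.eigenvalues j.rev)

/-- Applying a real function to a Hermitian matrix via the functional calculus yields a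
Hermitian matrix. -/
lemma isHermitian_cfc {n : ℕ} {A : Matrix (Fin n) (Fin n) ℂ} (hA : A.IsHermitian)
    (f : ℝ → ℝ) : (hA.cfc f).IsHermitian := by
  rw [← hA.cfc_eq]
  exact cfc_predicate f A

lemma isHermitian_half_smul {n : ℕ} {X : Matrix (Fin n) (Fin n) ℂ} (hX : X.IsHermitian) :
    ((2 : ℝ)⁻¹ • X).IsHermitian := by
  show _ = _
  rw [Matrix.conjTranspose_smul, star_trivial, hX.eq]

lemma isHermitian_sum_conj {m n : ℕ} {A : Fin m → Matrix (Fin n) (Fin n) ℂ}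
    (Z : Fin m → Matrix (Fin n) (Fin n) ℂ) (hA : ∀ i, (A i).IsHermitian) :
    (∑ i, (Z i)ᴴ * A i * Z i).IsHermitian := by
  show _ = _
  rw [Matrix.conjTranspose_sum]
  exact Finset.sum_congr rfl fun i _ => (isHermitian_conjTranspose_mul_mul (Z i) (hA i)).eq

/-! Let `S` be the sign of `A + B`, taken to be `1` on the kernel, so that `S` is a Hermitian
unitary with `S (A + B) = (A + B) S = |A + B|`. Then `|A + B| = Re (S A) + Re (S B)`, where
`Re X = (X + Xᴴ) / 2`, and it suffices to dominate `H = Re (S A)` by a unitary conjugate of `|A|`.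
Since `re ⟨x, H x⟩ = re ⟨S x, A x⟩ ≤ ‖A x‖ ‖x‖`, a Courant–Fischer dimension count (intersect the
span of the eigenvectors of `H` with eigenvalue `≥ c` with that of the eigenvectors of `A` with
`|eigenvalue| ≤ t`) shows that the eigenvalues of `H` and `|A|`, both sorted, compare termwise.
The unitary sending the eigenbasis of `|A|` to that of `H`, matched in sorted order, then gives
`H ≤ U |A| Uᴴ`. -/

open scoped InnerProductSpace

namespace Tuple

open Finset

variable {α : Type*} [LinearOrder α] {n : ℕ}

lemma lt_card_filter_le_apply_sort (f : Fin n → α) (j : Fin n) :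
    (j : ℕ) < #{i | f i ≤ f (sort f j)} :=
  calc (j : ℕ) < #(Iic j) := by simp
    _ = #((Iic j).map (sort f).toEmbedding) := (card_map _).symm
    _ ≤ _ := card_le_card fun i hi => by
      obtain ⟨k, hk, rfl⟩ := mem_map.mp hi
      simpa using monotone_sort f (mem_Iic.mp hk)

lemma sub_le_card_filter_apply_sort_le (f : Fin n → α) (j : Fin n) :
    n - j ≤ #{i | f (sort f j) ≤ f i} :=
  calc n - j = #(Ici j) := by simp
    _ = #((Ici j).map (sort f).toEmbedding) := (card_map _).symm
    _ ≤ _ := card_le_card fun i hi => by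
      obtain ⟨k, hk, rfl⟩ := mem_map.mp hi
      simpa using monotone_sort f (mem_Ici.mp hk)

lemma exists_perm_le_of_card_lt (g f : Fin n → α)
    (h : ∀ c t, n < #{i | c ≤ g i} + #{i | f i ≤ t} → c ≤ t) :
    ∃ σ : Equiv.Perm (Fin n), ∀ i, g i ≤ f (σ i) := by
  refine ⟨(sort g).symm.trans (sort f), fun i => ?_⟩
  obtain ⟨j, rfl⟩ := (sort g).surjective i
  simpa using h _ _ (by
    have := sub_le_card_filter_apply_sort_le g j
    have := lt_card_filter_le_apply_sort f j
    omega)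

end Tuple

lemma Submodule.exists_ne_zero_mem_inf_of_finrank_lt {K V : Type*} [DivisionRing K]
    [AddCommGroup V] [Module K V] [FiniteDimensional K V] {W₁ W₂ : Submodule K V}
    (h : Module.finrank K V < Module.finrank K W₁ + Module.finrank K W₂) :
    ∃ x ≠ 0, x ∈ W₁ ∧ x ∈ W₂ := by
  by_contra! hx
  exact h.not_ge (Submodule.finrank_add_finrank_le_of_disjoint
    (Submodule.disjoint_def.mpr fun x h₁ h₂ => by_contra fun h0 => hx x h0 h₁ h₂))

namespace OrthonormalBasis

variable {𝕜 E ι : Type*} [RCLike 𝕜] [NormedAddCommGroup E] [InnerProductSpace 𝕜 E] [Fintype ι]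
  (b : OrthonormalBasis ι 𝕜 E) {T : E →ₗ[𝕜] E} {μ : ι → ℝ}

lemma inner_apply_of_apply_eq_smul (hT : T.IsSymmetric) (hb : ∀ i, T (b i) = (μ i : 𝕜) • b i)
    (i : ι) (x : E) : ⟪b i, T x⟫_𝕜 = μ i * ⟪b i, x⟫_𝕜 := by
  rw [← hT, hb, inner_smul_left, RCLike.conj_ofReal]

lemma re_inner_apply_self_eq_sum (hT : T.IsSymmetric) (hb : ∀ i, T (b i) = (μ i : 𝕜) • b i)
    (x : E) : RCLike.re ⟪x, T x⟫_𝕜 = ∑ i, μ i * ‖⟪b i, x⟫_𝕜‖ ^ 2 := by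
  rw [← b.sum_inner_mul_inner x (T x), map_sum]
  refine Finset.sum_congr rfl fun i _ => ?_
  rw [b.inner_apply_of_apply_eq_smul hT hb, ← inner_conj_symm, mul_left_comm,
    RCLike.conj_mul, ← RCLike.ofReal_pow, ← RCLike.ofReal_mul, RCLike.ofReal_re]

lemma norm_apply_sq_eq_sum (hT : T.IsSymmetric) (hb : ∀ i, T (b i) = (μ i : 𝕜) • b i)
    (x : E) : ‖T x‖ ^ 2 = ∑ i, μ i ^ 2 * ‖⟪b i, x⟫_𝕜‖ ^ 2 := by
  simp only [← b.sum_sq_norm_inner_right (T x), b.inner_apply_of_apply_eq_smul hT hb, norm_mul,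
    mul_pow, RCLike.norm_ofReal, sq_abs]

lemma inner_eq_zero_of_mem_span {s : Finset ι} {x : E} (hx : x ∈ Submodule.span 𝕜 (b '' s))
    {i : ι} (hi : i ∉ s) : ⟪b i, x⟫_𝕜 = 0 := by
  refine Submodule.span_induction ?_ (inner_zero_right _) (fun _ _ _ _ h h' => by
    rw [inner_add_right, h, h', add_zero]) (fun _ _ _ h => by rw [inner_smul_right, h, mul_zero]) hx
  rintro _ ⟨j, hj, rfl⟩
  exact b.orthonormal.inner_eq_zero (ne_of_mem_of_not_mem hj hi).symm

lemma finrank_span_image (s : Finset ι) :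
    Module.finrank 𝕜 (Submodule.span 𝕜 (b '' s)) = s.card := by
  rw [Set.image_eq_range]
  exact (finrank_span_eq_card
    (b.orthonormal.linearIndependent.comp ((↑) : s → ι) Subtype.val_injective)).trans (by simp)

lemma mul_norm_sq_le_re_inner_apply_self (hT : T.IsSymmetric)
    (hb : ∀ i, T (b i) = (μ i : 𝕜) • b i) {s : Finset ι} {x : E} {c : ℝ} (hc : ∀ i ∈ s, c ≤ μ i)
    (hx : x ∈ Submodule.span 𝕜 (b '' s)) : c * ‖x‖ ^ 2 ≤ RCLike.re ⟪x, T x⟫_𝕜 := by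
  rw [b.re_inner_apply_self_eq_sum hT hb, ← b.sum_sq_norm_inner_right, Finset.mul_sum]
  refine Finset.sum_le_sum fun i _ => ?_
  by_cases hi : i ∈ s
  · exact mul_le_mul_of_nonneg_right (hc i hi) (sq_nonneg _)
  · simp [b.inner_eq_zero_of_mem_span hx hi]

lemma norm_apply_le_of_mem_span (hT : T.IsSymmetric) (hb : ∀ i, T (b i) = (μ i : 𝕜) • b i)
    {s : Finset ι} {x : E} {t : ℝ} (ht : 0 ≤ t) (hμ : ∀ i ∈ s, |μ i| ≤ t)
    (hx : x ∈ Submodule.span 𝕜 (b '' s)) : ‖T x‖ ≤ t * ‖x‖ := by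
  refine (pow_le_pow_iff_left₀ (norm_nonneg _) (by positivity) two_ne_zero).mp ?_
  rw [b.norm_apply_sq_eq_sum hT hb, mul_pow, ← b.sum_sq_norm_inner_right, Finset.mul_sum]
  refine Finset.sum_le_sum fun i _ => ?_
  by_cases hi : i ∈ s
  · exact mul_le_mul_of_nonneg_right (sq_le_sq.mpr ((hμ i hi).trans (le_abs_self t)))
      (sq_nonneg _)
  · simp [b.inner_eq_zero_of_mem_span hx hi]

end OrthonormalBasis

open Finset in
lemma OrthonormalBasis.le_of_re_inner_apply_self_le {𝕜 E ι : Type*} [RCLike 𝕜]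
    [NormedAddCommGroup E] [InnerProductSpace 𝕜 E] [Fintype ι] {T A : E →ₗ[𝕜] E}
    {b b' : OrthonormalBasis ι 𝕜 E} {μ ν : ι → ℝ} (hT : T.IsSymmetric) (hA : A.IsSymmetric)
    (hb : ∀ i, T (b i) = (μ i : 𝕜) • b i) (hb' : ∀ i, A (b' i) = (ν i : 𝕜) • b' i)
    (hTA : ∀ x, RCLike.re ⟪x, T x⟫_𝕜 ≤ ‖A x‖ * ‖x‖) {c t : ℝ}
    (hcard : Fintype.card ι < #{i | c ≤ μ i} + #{i | |ν i| ≤ t}) : c ≤ t := by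
  have : FiniteDimensional 𝕜 E := b.toBasis.finiteDimensional_of_finite
  obtain ⟨i, hi⟩ : ({i | |ν i| ≤ t} : Finset ι).Nonempty := by
    rw [← Finset.card_pos]
    have := card_le_univ ({i | c ≤ μ i} : Finset ι)
    omega
  have ht : 0 ≤ t := (abs_nonneg _).trans (mem_filter.mp hi).2
  obtain ⟨x, hx0, hxb, hxb'⟩ := Submodule.exists_ne_zero_mem_inf_of_finrank_lt
    (W₁ := Submodule.span 𝕜 (b '' ↑({i | c ≤ μ i} : Finset ι)))
    (W₂ := Submodule.span 𝕜 (b' '' ↑({i | |ν i| ≤ t} : Finset ι)))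
    (by rwa [b.finrank_span_image, b'.finrank_span_image, Module.finrank_eq_card_basis b.toBasis])
  have hx : 0 < ‖x‖ ^ 2 := by positivity
  refine le_of_mul_le_mul_right ?_ hx
  calc c * ‖x‖ ^ 2 ≤ RCLike.re ⟪x, T x⟫_𝕜 :=
        b.mul_norm_sq_le_re_inner_apply_self hT hb (fun i hi => (mem_filter.mp hi).2) hxb
    _ ≤ ‖A x‖ * ‖x‖ := hTA x
    _ ≤ t * ‖x‖ * ‖x‖ := mul_le_mul_of_nonneg_right
        (b'.norm_apply_le_of_mem_span hA hb' ht (fun i hi => (mem_filter.mp hi).2) hxb')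
        (norm_nonneg _)
    _ = t * ‖x‖ ^ 2 := by ring

lemma LinearMap.IsSymmetric.re_inner_apply_add_apply_le {𝕜 E : Type*} [RCLike 𝕜]
    [NormedAddCommGroup E] [InnerProductSpace 𝕜 E] {S A : E →ₗ[𝕜] E} (hS : S.IsSymmetric)
    (hA : A.IsSymmetric) {x : E} (hSx : ‖S x‖ = ‖x‖) :
    RCLike.re ⟪x, S (A x) + A (S x)⟫_𝕜 ≤ 2 * (‖A x‖ * ‖x‖) := by
  rw [inner_add_right, map_add, ← hS, ← hA x (S x), inner_re_symm (A x)]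
  have := re_inner_le_norm (𝕜 := 𝕜) (S x) (A x)
  rw [hSx] at this
  linarith

namespace Matrix

open Unitary

variable {𝕜 : Type*} [RCLike 𝕜]

section Fintype

variable {n : Type*} [Fintype n] [DecidableEq n]

lemma IsHermitian.toEuclideanLin_eigenvectorBasis {A : Matrix n n 𝕜} (hA : A.IsHermitian)
    (i : n) :
    toEuclideanLin A (hA.eigenvectorBasis i) = (hA.eigenvalues i : 𝕜) • hA.eigenvectorBasis i := by
  ext1
  rw [toLpLin_apply, WithLp.ofLp_toLp, hA.mulVec_eigenvectorBasis, WithLp.ofLp_smul,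
    RCLike.real_smul_eq_coe_smul (K := 𝕜)]

lemma submatrix_id_mem_unitaryGroup {Q : Matrix n n 𝕜} (hQ : Q ∈ unitaryGroup n 𝕜)
    (σ : Equiv.Perm n) : Q.submatrix id σ ∈ unitaryGroup n 𝕜 := by
  rw [mem_unitaryGroup_iff', star_eq_conjTranspose, conjTranspose_submatrix,
    ← submatrix_mul _ _ _ _ _ Function.bijective_id, ← star_eq_conjTranspose,
    (mem_unitaryGroup_iff'.mp hQ), submatrix_one_equiv]

lemma submatrix_id_mul_diagonal_mul_star (Q : Matrix n n 𝕜) (d : n → 𝕜) (σ : Equiv.Perm n) :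
    Q.submatrix id σ * diagonal (d ∘ σ) * star (Q.submatrix id σ) = Q * diagonal d * star Q := by
  rw [← submatrix_diagonal_equiv, star_eq_conjTranspose, conjTranspose_submatrix,
    submatrix_mul_equiv _ _ _ σ, submatrix_mul_equiv _ _ _ σ, submatrix_id_id,
    star_eq_conjTranspose]

lemma IsHermitian.exists_mem_unitaryGroup_posSemidef_conj_sub {H : Matrix n n 𝕜}
    (hH : H.IsHermitian) (Q : unitaryGroup n 𝕜) {d : n → ℝ} {σ : Equiv.Perm n}
    (hle : ∀ i, hH.eigenvalues i ≤ d (σ i)) :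
    ∃ U ∈ unitaryGroup n 𝕜,
      (U * conjStarAlgAut 𝕜 _ Q (diagonal (RCLike.ofReal ∘ d)) * Uᴴ - H).PosSemidef := by
  let R : unitaryGroup n 𝕜 := ⟨_, submatrix_id_mem_unitaryGroup Q.2 σ⟩
  have hR : conjStarAlgAut 𝕜 _ Q (diagonal (RCLike.ofReal ∘ d)) =
      conjStarAlgAut 𝕜 _ R (diagonal (RCLike.ofReal ∘ d ∘ σ)) :=
    (submatrix_id_mul_diagonal_mul_star _ _ σ).symm
  -- `U` sends the columns of `Q`, permuted by `σ`, to the eigenbasis of `H`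
  refine ⟨↑(hH.eigenvectorUnitary * star R), SetLike.coe_mem _, ?_⟩
  have hdiff : conjStarAlgAut 𝕜 _ hH.eigenvectorUnitary (diagonal (RCLike.ofReal ∘ d ∘ σ)) - H =
      conjStarAlgAut 𝕜 _ hH.eigenvectorUnitary
        (diagonal (RCLike.ofReal ∘ (d ∘ σ - hH.eigenvalues))) := by
    conv_lhs => arg 2; rw [hH.spectral_theorem]
    rw [← map_sub, diagonal_sub]
    congr 2 with i
    simp
  rw [← star_eq_conjTranspose, ← conjStarAlgAut_apply (S := 𝕜), hR, ← conjStarAlgAut_mul_apply,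
    mul_assoc, star_mul_self, mul_one, hdiff, conjStarAlgAut_apply]
  refine (PosSemidef.diagonal fun i => ?_).mul_mul_conjTranspose_same _
  simpa using hle i

lemma IsHermitian.exists_isHermitian_mem_unitaryGroup_mul_eq_cfc_abs {X : Matrix n n 𝕜}
    (hX : X.IsHermitian) :
    ∃ S : Matrix n n 𝕜, S.IsHermitian ∧ S ∈ unitaryGroup n 𝕜 ∧ S * X = hX.cfc (|·|) := by
  have hc (f : ℝ → ℝ) : ContinuousOn f (spectrum ℝ X) := X.finite_real_spectrum.continuousOn f
  -- a sign function that does not vanish at `0`, so that it squares to `1`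
  let sgn : ℝ → ℝ := fun t => if t < 0 then -1 else 1
  have hS : IsSelfAdjoint (cfc sgn X) := cfc_predicate _ _
  refine ⟨cfc sgn X, hS, ?_, ?_⟩
  · rw [mem_unitaryGroup_iff', hS.star_eq, ← cfc_mul sgn sgn X (hc _) (hc _), ← cfc_one ℝ X]
    exact cfc_congr fun t _ => by simp only [sgn]; split_ifs <;> norm_num
  · conv_lhs => arg 2; rw [← cfc_id' ℝ X]
    rw [← cfc_mul _ _ X (hc _) (hc _), ← hX.cfc_eq]
    exact cfc_congr fun t _ => by
      simp only [sgn]; split_ifs with h <;> simp [abs_of_neg, abs_of_nonneg, not_lt.mp, *]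

lemma re_inner_toEuclideanLin_half_smul_le {S A : Matrix n n 𝕜} (hS : S.IsHermitian)
    (hSU : S ∈ unitaryGroup n 𝕜) (hA : A.IsHermitian) (x : EuclideanSpace 𝕜 n) :
    RCLike.re ⟪x, toEuclideanLin ((2 : ℝ)⁻¹ • (S * A + A * S)) x⟫_𝕜 ≤
      ‖toEuclideanLin A x‖ * ‖x‖ := by
  have hSx : ‖toEuclideanLin S x‖ = ‖x‖ :=
    ContinuousLinearMap.norm_map_of_mem_unitary
      (Unitary.map_mem (toEuclideanCLM (n := n) (𝕜 := 𝕜)) hSU) x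
  have := (isSymmetric_toEuclideanLin_iff.mpr hS).re_inner_apply_add_apply_le
    (isSymmetric_toEuclideanLin_iff.mpr hA) hSx
  rw [RCLike.real_smul_eq_coe_smul (K := 𝕜), map_smul, map_add, toLpLin_mul_same,
    toLpLin_mul_same]
  simp only [LinearMap.smul_apply, LinearMap.add_apply, LinearMap.comp_apply, inner_smul_right]
  rw [RCLike.re_ofReal_mul]
  linarith

end Fintype

lemma IsHermitian.exists_mem_unitaryGroup_posSemidef_sub_half_smul {n : ℕ}
    {A S : Matrix (Fin n) (Fin n) 𝕜} (hA : A.IsHermitian) (hS : S.IsHermitian)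
    (hSU : S ∈ unitaryGroup (Fin n) 𝕜) :
    ∃ U ∈ unitaryGroup (Fin n) 𝕜,
      (U * hA.cfc (|·|) * Uᴴ - (2 : ℝ)⁻¹ • (S * A + A * S)).PosSemidef := by
  have hSA : (S * A + A * S).IsHermitian := by
    rw [IsHermitian, conjTranspose_add, conjTranspose_mul, conjTranspose_mul, hA.eq, hS.eq,
      add_comm]
  have hH : ((2 : ℝ)⁻¹ • (S * A + A * S)).IsHermitian := hSA.smul (.all _)
  obtain ⟨σ, hσ⟩ := Tuple.exists_perm_le_of_card_lt hH.eigenvalues (|hA.eigenvalues ·|)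
    fun c t hct => OrthonormalBasis.le_of_re_inner_apply_self_le
      (isSymmetric_toEuclideanLin_iff.mpr hH) (isSymmetric_toEuclideanLin_iff.mpr hA)
      hH.toEuclideanLin_eigenvectorBasis hA.toEuclideanLin_eigenvectorBasis
      (re_inner_toEuclideanLin_half_smul_le hS hSU hA) (by simpa using hct)
  exact hH.exists_mem_unitaryGroup_posSemidef_conj_sub hA.eigenvectorUnitary hσ

end Matrix

/-- For Hermitian `A, B` there are unitaries `U, V` with
`|A + B| ≤ U |A| Uᴴ + V |B| Vᴴ` in the Loewner order. -/
theorem abs_add_le_unitary_conj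
    {n : ℕ} (A B : Matrix (Fin n) (Fin n) ℂ) (hA : A.IsHermitian) (hB : B.IsHermitian) :
    ∃ U V : Matrix (Fin n) (Fin n) ℂ,
      U ∈ Matrix.unitaryGroup (Fin n) ℂ ∧ V ∈ Matrix.unitaryGroup (Fin n) ℂ ∧
      (U * hA.cfc (fun t => |t|) * Uᴴ + V * hB.cfc (fun t => |t|) * Vᴴ -
        (hA.add hB).cfc fun t => |t|).PosSemidef := by
  obtain ⟨S, hS, hSU, hSX⟩ := (hA.add hB).exists_isHermitian_mem_unitaryGroup_mul_eq_cfc_abs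
  have hXS : (A + B) * S = (hA.add hB).cfc (|·|) :=
    calc (A + B) * S = (S * (A + B))ᴴ := by rw [conjTranspose_mul, hS.eq, (hA.add hB).eq]
      _ = _ := by rw [hSX, (isHermitian_cfc _ _).eq]
  have hsplit : (hA.add hB).cfc (|·|) =
      (2 : ℝ)⁻¹ • (S * A + A * S) + (2 : ℝ)⁻¹ • (S * B + B * S) := by
    rw [← smul_add, show S * A + A * S + (S * B + B * S) = S * (A + B) + (A + B) * S by
      noncomm_ring, hSX, hXS, ← two_smul ℝ, smul_smul, inv_mul_cancel₀ two_ne_zero, one_smul]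
  obtain ⟨U, hU, hUA⟩ := hA.exists_mem_unitaryGroup_posSemidef_sub_half_smul hS hSU
  obtain ⟨V, hV, hVB⟩ := hB.exists_mem_unitaryGroup_posSemidef_sub_half_smul hS hSU
  refine ⟨U, V, hU, hV, ?_⟩
  rw [hsplit, add_sub_add_comm]
  exact hUA.add hVB
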